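/- arXiv:1605.02509 — 5 statements merged into one kernel-verified Lean document; each statement's English description precedes it below -/
import Mathlib

section
/- Let λ ∈ (0,1) and a > −2λ/(1+λ), and define h(t) = log( t^{a+1}·(1+λt)/(t+λ) ) for t ∈ (0,1]. Then h(t) → −∞ as t → 0⁺, h(1) = 0, and for every t ∈ (0,1]: h(t) ≤ 0 and the derivative h′(t) = (a+1)/t − 1/(t+λ) + λ/(1+λt) is strictly positive. -/
/-! The derivative of `h` over the common denominator `t (t + λ) (1 + λ t)` has numerator
`(a + 1) (t + λ) (1 + λ t) - (1 - λ²) t`.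
Since `(t + λ) (1 + λ t) - (1 + λ)² t = λ (1 - t)² ≥ 0`, it is positive
as soon as `(a + 1) (1 + λ) > 1 - λ`, which is the hypothesis `a > -2λ/(1+λ)`.
Hence `h` is strictly increasing on `(0, ∞)`, and `h ≤ h 1 = 0` on `(0, 1]`. -/

open Real Filter Topology Set

noncomputable def logPowRatio (l b t : ℝ) : ℝ :=
  log (t ^ b * (1 + l * t) / (t + l))

namespace logPowRatio

variable {l b t : ℝ}

lemma eq_add_sub (hl : 0 ≤ l) (ht : 0 < t) :
    logPowRatio l b t = b * log t + log (1 + l * t) - log (t + l) := by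
  have h₁ : 0 < 1 + l * t := by positivity
  have h₂ : 0 < t + l := by positivity
  rw [logPowRatio, log_div (by positivity) h₂.ne', log_mul (by positivity) h₁.ne', log_rpow ht]

lemma apply_one (l b : ℝ) : logPowRatio l b 1 = 0 := by
  simp [logPowRatio, add_comm 1 l]

lemma hasDerivAt (hl : 0 ≤ l) (ht : 0 < t) :
    HasDerivAt (logPowRatio l b) (b / t - 1 / (t + l) + l / (1 + l * t)) t := by
  have h₁ : 0 < 1 + l * t := by positivity
  have h₂ : 0 < t + l := by positivity
  have hsplit :
      (fun x ↦ b * log x + log (1 + l * x) - log (x + l)) =ᶠ[𝓝 t] logPowRatio l b :=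
    eventually_of_mem (Ioi_mem_nhds ht) fun x hx ↦ (eq_add_sub hl hx).symm
  have hderiv := (((hasDerivAt_log ht.ne').const_mul b).add
    ((((hasDerivAt_id t).const_mul l).const_add 1).log h₁.ne')).sub
    (((hasDerivAt_id t).add_const l).log h₂.ne')
  refine (hderiv.congr_of_eventuallyEq hsplit.symm).congr_deriv ?_
  simp only [id]
  ring

lemma deriv_pos (hl : 0 ≤ l) (hb : 0 < b) (hbl : 1 - l < b * (1 + l)) (ht : 0 < t) :
    0 < b / t - 1 / (t + l) + l / (1 + l * t) := by
  have h₁ : 0 < 1 + l * t := by positivity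
  have h₂ : 0 < t + l := by positivity
  have hamgm : t * (1 + l) ^ 2 ≤ (t + l) * (1 + l * t) := by
    nlinarith [mul_nonneg hl (sq_nonneg (1 - t))]
  have hnum : 0 < b * ((t + l) * (1 + l * t)) - (1 - l ^ 2) * t := by
    nlinarith [mul_le_mul_of_nonneg_left hamgm hb.le,
      mul_lt_mul_of_pos_left hbl (by positivity : 0 < t * (1 + l))]
  have hform : b / t - 1 / (t + l) + l / (1 + l * t) =
      (b * ((t + l) * (1 + l * t)) - (1 - l ^ 2) * t) / (t * (t + l) * (1 + l * t)) := by
    field_simp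
    ring
  rw [hform]
  positivity

lemma strictMonoOn (hl : 0 ≤ l) (hb : 0 < b) (hbl : 1 - l < b * (1 + l)) :
    StrictMonoOn (logPowRatio l b) (Ioi 0) := by
  refine strictMonoOn_of_deriv_pos (convex_Ioi 0)
    (fun x hx ↦ (hasDerivAt hl hx).continuousAt.continuousWithinAt) fun x hx ↦ ?_
  rw [interior_Ioi] at hx
  rw [(hasDerivAt hl hx).deriv]
  exact deriv_pos hl hb hbl hx

lemma nonpos_of_le_one (hl : 0 ≤ l) (hb : 0 < b) (hbl : 1 - l < b * (1 + l))
    (ht : t ∈ Ioc 0 1) : logPowRatio l b t ≤ 0 :=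
  apply_one l b ▸ (strictMonoOn hl hb hbl).monotoneOn ht.1 (mem_Ioi.2 one_pos) ht.2

lemma tendsto_atBot (hl : 0 < l) (hb : 0 < b) :
    Tendsto (logPowRatio l b) (𝓝[>] 0) atBot := by
  have hcont : ContinuousAt (fun x ↦ log (1 + l * x) - log (x + l)) 0 := by
    have : (1 : ℝ) + l * 0 ≠ 0 := by simp
    have : (0 : ℝ) + l ≠ 0 := by simp [hl.ne']
    fun_prop (disch := assumption)
  have hsum := (tendsto_log_nhdsGT_zero.const_mul_atBot hb).atBot_add
    (hcont.tendsto.mono_left nhdsWithin_le_nhds)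
  refine hsum.congr' (eventually_mem_nhdsWithin.mono fun x hx ↦ ?_)
  rw [eq_add_sub hl.le hx]
  ring

end logPowRatio

theorem stmt7 (l a : ℝ) (hl : l ∈ Set.Ioo (0 : ℝ) 1) (ha : a > -2 * l / (1 + l))
    (h : ℝ → ℝ) (hh : ∀ t, h t = Real.log (t ^ (a + 1) * (1 + l * t) / (t + l))) :
    Tendsto h (nhdsWithin 0 (Set.Ioi (0 : ℝ))) atBot ∧
    h 1 = 0 ∧
    ∀ t ∈ Set.Ioc (0 : ℝ) 1,
      h t ≤ 0 ∧
      HasDerivAt h ((a + 1) / t - 1 / (t + l) + l / (1 + l * t)) t ∧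
      0 < (a + 1) / t - 1 / (t + l) + l / (1 + l * t) := by
  obtain ⟨hl0, hl1⟩ := hl
  obtain rfl : h = logPowRatio l (a + 1) := funext hh
  have hbl : 1 - l < (a + 1) * (1 + l) := by
    rw [gt_iff_lt, div_lt_iff₀ (by linarith)] at ha
    linarith
  have hb : 0 < a + 1 := by nlinarith
  refine ⟨logPowRatio.tendsto_atBot hl0 hb, logPowRatio.apply_one l _, fun t ht ↦ ?_⟩
  exact ⟨logPowRatio.nonpos_of_le_one hl0.le hb hbl ht, logPowRatio.hasDerivAt hl0.le ht.1,
    logPowRatio.deriv_pos hl0.le hb hbl ht.1⟩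
end

section
/- Let λ ∈ (0,1) and a = −2λ/(1+λ), and define h(t) = log( t^{a+1}·(1+λt)/(t+λ) ) for t ∈ (0,1]. Then for every t ∈ (0,1): h(t) < 0 and h′(t) = (a+1)/t − 1/(t+λ) + λ/(1+λt) > 0; moreover at t = 1: h′(1) = 0, the second derivative h″(1) = −(a+1) + 1/(1+λ)² − λ²/(1+λ)² equals 0, and the third derivative h‴(1) = 2(a+1) − 2/(1+λ)³ + 2λ³/(1+λ)³ equals 2λ(1−λ)/(1+λ)³. -/
/-!
Split `h` into `(a + 1) log t + log (1 + λt) - log (t + λ)`. For `a + 1 = (1 - λ)/(1 + λ)` its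
derivative is `λ(1 - λ)(t - 1)² / ((1 + λ) t (t + λ)(1 + λt))`, positive away from `t = 1`, so `h`
increases strictly on `(0, 1]` up to `h 1 = 0`. The statements at `t = 1` are identities in `λ`.
-/

open Real Set

noncomputable def logRatio (l a x : ℝ) : ℝ :=
  (a + 1) * log x + log (1 + l * x) - log (x + l)

section
variable {l a x : ℝ}

lemma log_eq_logRatio (hl : 0 ≤ l) (hx : 0 < x) :
    log (x ^ (a + 1) * (1 + l * x) / (x + l)) = logRatio l a x := by
  rw [log_div (by positivity) (by positivity), log_mul (by positivity) (by positivity),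
    log_rpow hx, logRatio]

lemma logRatio_one : logRatio l a 1 = 0 := by
  simp [logRatio, add_comm]

lemma hasDerivAt_logRatio (hl : 0 ≤ l) (hx : 0 < x) :
    HasDerivAt (logRatio l a) ((a + 1) / x - 1 / (x + l) + l / (1 + l * x)) x := by
  have hlog : HasDerivAt (fun y => (a + 1) * log y) ((a + 1) * x⁻¹) x :=
    (hasDerivAt_log hx.ne').const_mul (a + 1)
  have hnum : HasDerivAt (fun y => log (1 + l * y)) (l / (1 + l * x)) x := by
    simpa using (((hasDerivAt_id x).const_mul l).const_add 1).log (by positivity)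
  have hden : HasDerivAt (fun y => log (y + l)) (1 / (x + l)) x := by
    simpa using ((hasDerivAt_id x).add_const l).log (by positivity)
  exact ((hlog.add hnum).sub hden).congr_deriv (by ring)

lemma logRatio_deriv_eq (hl : 0 ≤ l) (ha : a = -2 * l / (1 + l)) (hx : 0 < x) :
    (a + 1) / x - 1 / (x + l) + l / (1 + l * x)
      = l * (1 - l) * (x - 1) ^ 2 / ((1 + l) * x * (x + l) * (1 + l * x)) := by
  have : 0 < x + l := by positivity
  have : 0 < 1 + l * x := by positivity
  subst ha
  field_simp
  ring

lemma logRatio_deriv_pos (hl : l ∈ Ioo (0 : ℝ) 1) (ha : a = -2 * l / (1 + l)) (hx : 0 < x)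
    (hx1 : x ≠ 1) : 0 < (a + 1) / x - 1 / (x + l) + l / (1 + l * x) := by
  obtain ⟨hl0, hl1⟩ := hl
  rw [logRatio_deriv_eq hl0.le ha hx]
  have : 0 < 1 - l := by linarith
  have : x - 1 ≠ 0 := sub_ne_zero.mpr hx1
  positivity

lemma strictMonoOn_logRatio (hl : l ∈ Ioo (0 : ℝ) 1) (ha : a = -2 * l / (1 + l)) :
    StrictMonoOn (logRatio l a) (Ioc 0 1) := by
  have hderiv x (hx : 0 < x) := hasDerivAt_logRatio (a := a) hl.1.le hx
  refine strictMonoOn_of_deriv_pos (convex_Ioc 0 1)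
    (fun x hx => (hderiv x hx.1).continuousAt.continuousWithinAt) fun x hx => ?_
  rw [interior_Ioc] at hx
  rw [(hderiv x hx.1).deriv]
  exact logRatio_deriv_pos hl ha hx.1 hx.2.ne

lemma logRatio_neg (hl : l ∈ Ioo (0 : ℝ) 1) (ha : a = -2 * l / (1 + l)) (hx : x ∈ Ioo (0 : ℝ) 1) :
    logRatio l a x < 0 := by
  rw [← logRatio_one (l := l) (a := a)]
  exact strictMonoOn_logRatio hl ha (Ioo_subset_Ioc_self hx) (by simp) hx.2

end

theorem stmt8 (l a : ℝ) (hl : l ∈ Set.Ioo (0 : ℝ) 1) (ha : a = -2 * l / (1 + l))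
    (h : ℝ → ℝ) (hh : ∀ t, h t = Real.log (t ^ (a + 1) * (1 + l * t) / (t + l))) :
    (∀ t ∈ Set.Ioo (0 : ℝ) 1,
      h t < 0 ∧ 0 < (a + 1) / t - 1 / (t + l) + l / (1 + l * t)) ∧
    (a + 1) / 1 - 1 / (1 + l) + l / (1 + l * 1) = 0 ∧
    -(a + 1) + 1 / (1 + l) ^ 2 - l ^ 2 / (1 + l) ^ 2 = 0 ∧
    2 * (a + 1) - 2 / (1 + l) ^ 3 + 2 * l ^ 3 / (1 + l) ^ 3
      = 2 * l * (1 - l) / (1 + l) ^ 3 := by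
  refine ⟨fun t ht => ⟨?_, logRatio_deriv_pos hl ha ht.1 ht.2.ne⟩, ?_, ?_, ?_⟩
  · rw [hh, log_eq_logRatio hl.1.le ht.1]
    exact logRatio_neg hl ha ht
  all_goals
    have : 0 < 1 + l := by linarith [hl.1]
    subst ha
    field_simp
    ring
end

section
/- Let λ ∈ (0,1) and a ∈ (−1, −2λ/(1+λ)), and define h(t) = log( t^{a+1}·(1+λt)/(t+λ) ) for t ∈ (0,1]. Set y = (a + aλ² + 2λ²)/(2λ(a+1)) and t₋ = −y − √(y² − 1). Then t₋ ∈ (0,1), h′(t₋) = 0, h″(t₋) = (λ/t₋)·( −1/(λ+t₋)² + 1/(1+λt₋)² ) < 0, h(t₋) > 0, and h attains its unique global maximum on (0,1] at t₋ (i.e. h(t) < h(t₋) for all t ∈ (0,1] with t ≠ t₋). -/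
/-!
Writing `h t = (a+1) log t + log (1 + λt) - log (t + λ)` (with `λ = l`), one finds
`h′(t) = λ(a+1)(t² + 2yt + 1) / (t(t+λ)(1+λt))`. For `y < -1` the quadratic has the two
positive roots `t₋ < 1 < 1/t₋`, so `h` increases on `(0, t₋]` and decreases on `[t₋, 1]`;
since `h 1 = 0`, the maximum `h t₋` is positive. At a critical point
`a + 1 = t(1/(t+λ) - λ/(1+λt))`, which turns `h″(t₋)` into the stated expression, negative
because `λ + t < 1 + λt` on `(0,1)²`.
-/

open Real Set

section Quadratic

variable {y r t : ℝ}

lemma neg_sub_sqrt_mem_Ioo (hy : y < -1) : -y - √(y ^ 2 - 1) ∈ Ioo 0 1 := by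
  have hs2 : √(y ^ 2 - 1) ^ 2 = y ^ 2 - 1 := sq_sqrt (by nlinarith)
  have hs0 : 0 ≤ √(y ^ 2 - 1) := sqrt_nonneg _
  constructor <;> nlinarith

lemma neg_sub_sqrt_isRoot (hy : 1 ≤ y ^ 2) :
    (-y - √(y ^ 2 - 1)) ^ 2 + 2 * y * (-y - √(y ^ 2 - 1)) + 1 = 0 := by
  have hs2 : √(y ^ 2 - 1) ^ 2 = y ^ 2 - 1 := sq_sqrt (by linarith)
  linear_combination hs2

/-- The roots of `t² + 2yt + 1` are `r` and `1/r`. -/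
lemma quadratic_mul_root_eq (hr : r ^ 2 + 2 * y * r + 1 = 0) :
    (t ^ 2 + 2 * y * t + 1) * r = (t - r) * (t * r - 1) := by
  linear_combination t * hr

lemma quadratic_pos_of_lt_root (hr : r ^ 2 + 2 * y * r + 1 = 0) (hr1 : r ≤ 1)
    (ht0 : 0 < t) (ht : t < r) : 0 < t ^ 2 + 2 * y * t + 1 := by
  have htr : t * r < 1 := by nlinarith
  have := quadratic_mul_root_eq (t := t) hr
  nlinarith [mul_pos (sub_pos.2 ht) (sub_pos.2 htr)]

lemma quadratic_neg_of_root_lt (hr : r ^ 2 + 2 * y * r + 1 = 0) (hr0 : 0 < r)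
    (ht : r < t) (htr : t * r < 1) : t ^ 2 + 2 * y * t + 1 < 0 := by
  have := quadratic_mul_root_eq (t := t) hr
  nlinarith [mul_pos (sub_pos.2 ht) (sub_pos.2 htr)]

end Quadratic

/-- `log (t ^ (a+1) * (1 + l t) / (t + l))` split into logarithms, valid for `t > 0`, `l ≥ 0`. -/
noncomputable def logProfile (l a t : ℝ) : ℝ :=
  (a + 1) * log t + log (1 + l * t) - log (t + l)

namespace logProfile

variable {l a t : ℝ}

lemma log_eq (hl : 0 ≤ l) (ht : 0 < t) :
    log (t ^ (a + 1) * (1 + l * t) / (t + l)) = logProfile l a t := by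
  have h1 : 0 < 1 + l * t := by positivity
  have h2 : 0 < t + l := by positivity
  rw [log_div (by positivity) h2.ne', log_mul (rpow_pos_of_pos ht _).ne' h1.ne',
    log_rpow ht, logProfile]

lemma hasDerivAt (hl : 0 ≤ l) (ht : 0 < t) :
    HasDerivAt (logProfile l a) ((a + 1) / t - 1 / (t + l) + l / (1 + l * t)) t := by
  have h1 : 1 + l * t ≠ 0 := by positivity
  have h2 : t + l ≠ 0 := by positivity
  have hlog := (hasDerivAt_log ht.ne').const_mul (a + 1)
  have hnum := (((hasDerivAt_id t).const_mul l).const_add 1).log h1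
  have hden := ((hasDerivAt_id t).add_const l).log h2
  exact ((hlog.add hnum).sub hden).congr_deriv (by simp only [id]; ring)

lemma deriv_eq (hy : 2 * l * (a + 1) * y = a + a * l ^ 2 + 2 * l ^ 2)
    (ht : t ≠ 0) (htl : t + l ≠ 0) (hlt : 1 + l * t ≠ 0) :
    (a + 1) / t - 1 / (t + l) + l / (1 + l * t)
      = l * (a + 1) * (t ^ 2 + 2 * y * t + 1) / (t * (t + l) * (1 + l * t)) := by
  rw [div_sub_div _ _ ht htl, div_add_div _ _ (mul_ne_zero ht htl) hlt]
  congr 1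
  linear_combination (-t) * hy

variable {y r : ℝ}

lemma strictMonoOn_Ioc (hl : 0 < l) (ha : 0 < a + 1)
    (hy : 2 * l * (a + 1) * y = a + a * l ^ 2 + 2 * l ^ 2)
    (hr : r ^ 2 + 2 * y * r + 1 = 0) (hr1 : r ≤ 1) :
    StrictMonoOn (logProfile l a) (Ioc 0 r) := by
  apply strictMonoOn_of_deriv_pos (convex_Ioc 0 r)
  · exact fun t ht => (hasDerivAt hl.le ht.1).continuousAt.continuousWithinAt
  · rw [interior_Ioc]
    rintro t ⟨ht0, htr⟩
    rw [(hasDerivAt hl.le ht0).deriv, deriv_eq hy ht0.ne' (by positivity) (by positivity)]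
    have := quadratic_pos_of_lt_root hr hr1 ht0 htr
    positivity

lemma strictAntiOn_Icc (hl : 0 < l) (ha : 0 < a + 1)
    (hy : 2 * l * (a + 1) * y = a + a * l ^ 2 + 2 * l ^ 2)
    (hr : r ^ 2 + 2 * y * r + 1 = 0) (hr0 : 0 < r) :
    StrictAntiOn (logProfile l a) (Icc r 1) := by
  apply strictAntiOn_of_deriv_neg (convex_Icc r 1)
  · exact fun t ht =>
      (hasDerivAt hl.le (hr0.trans_le ht.1)).continuousAt.continuousWithinAt
  · rw [interior_Icc]
    rintro t ⟨hrt, ht1⟩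
    have ht0 : 0 < t := hr0.trans hrt
    rw [(hasDerivAt hl.le ht0).deriv, deriv_eq hy ht0.ne' (by positivity) (by positivity)]
    have hq := quadratic_neg_of_root_lt hr hr0 hrt (by nlinarith)
    exact div_neg_of_neg_of_pos (mul_neg_of_pos_of_neg (by positivity) hq) (by positivity)

end logProfile

lemma second_deriv_eq_of_critical {l a t : ℝ} (hl : 0 ≤ l) (ht : 0 < t)
    (hcrit : (a + 1) / t - 1 / (t + l) + l / (1 + l * t) = 0) :
    -(a + 1) / t ^ 2 + 1 / (t + l) ^ 2 - l ^ 2 / (1 + l * t) ^ 2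
      = (l / t) * (-(1 / (l + t) ^ 2) + 1 / (1 + l * t) ^ 2) := by
  have h1 : 1 + l * t ≠ 0 := by positivity
  have h2 : t + l ≠ 0 := by positivity
  have ha : a + 1 = t * (1 / (t + l) - l / (1 + l * t)) := by
    field_simp at hcrit ⊢
    linear_combination hcrit
  rw [ha, add_comm l t]
  field_simp
  ring

lemma mul_inv_sq_sub_inv_sq_neg {l t : ℝ} (hl : l ∈ Ioo 0 1) (ht : t ∈ Ioo 0 1) :
    (l / t) * (-(1 / (l + t) ^ 2) + 1 / (1 + l * t) ^ 2) < 0 := by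
  obtain ⟨hl0, hl1⟩ := hl
  obtain ⟨ht0, ht1⟩ := ht
  have hlt : l + t < 1 + l * t := by nlinarith [mul_pos (sub_pos.2 hl1) (sub_pos.2 ht1)]
  have hsq : 1 / (1 + l * t) ^ 2 < 1 / (l + t) ^ 2 :=
    one_div_lt_one_div_of_lt (by positivity) (pow_lt_pow_left₀ hlt (by positivity) two_ne_zero)
  exact mul_neg_of_pos_of_neg (by positivity) (by linarith)

lemma quadratic_coeff_lt_neg_one {l a : ℝ} (hl : 0 < l) (ha : a ∈ Ioo (-1) (-2 * l / (1 + l))) :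
    (a + a * l ^ 2 + 2 * l ^ 2) / (2 * l * (a + 1)) < -1 := by
  obtain ⟨ha1, ha2⟩ := ha
  rw [lt_div_iff₀ (by linarith)] at ha2
  rw [div_lt_iff₀ (by nlinarith)]
  nlinarith

theorem stmt9 (l a : ℝ) (hl : l ∈ Set.Ioo (0 : ℝ) 1)
    (ha : a ∈ Set.Ioo (-1 : ℝ) (-2 * l / (1 + l)))
    (h : ℝ → ℝ) (hh : ∀ t, h t = Real.log (t ^ (a + 1) * (1 + l * t) / (t + l)))
    (y tm : ℝ) (hy : y = (a + a * l ^ 2 + 2 * l ^ 2) / (2 * l * (a + 1)))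
    (htm : tm = -y - Real.sqrt (y ^ 2 - 1)) :
    tm ∈ Set.Ioo (0 : ℝ) 1 ∧
    (a + 1) / tm - 1 / (tm + l) + l / (1 + l * tm) = 0 ∧
    -(a + 1) / tm ^ 2 + 1 / (tm + l) ^ 2 - l ^ 2 / (1 + l * tm) ^ 2
      = (l / tm) * (-(1 / (l + tm) ^ 2) + 1 / (1 + l * tm) ^ 2) ∧
    (l / tm) * (-(1 / (l + tm) ^ 2) + 1 / (1 + l * tm) ^ 2) < 0 ∧
    0 < h tm ∧
    ∀ t ∈ Set.Ioc (0 : ℝ) 1, t ≠ tm → h t < h tm := by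
  have hl0 : 0 < l := hl.1
  have ha1 : 0 < a + 1 := by linarith [ha.1]
  have hyl : 2 * l * (a + 1) * y = a + a * l ^ 2 + 2 * l ^ 2 := by
    rw [hy]; field_simp
  have hy1 : y < -1 := hy ▸ quadratic_coeff_lt_neg_one hl0 ha
  have htm01 : tm ∈ Ioo 0 1 := htm ▸ neg_sub_sqrt_mem_Ioo hy1
  have hroot : tm ^ 2 + 2 * y * tm + 1 = 0 := htm ▸ neg_sub_sqrt_isRoot (by nlinarith)
  have hcrit : (a + 1) / tm - 1 / (tm + l) + l / (1 + l * tm) = 0 := by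
    rw [logProfile.deriv_eq hyl htm01.1.ne' (by linarith [htm01.1]) (by nlinarith [htm01.1]),
      hroot, mul_zero, zero_div]
  have hh' : ∀ t, 0 < t → h t = logProfile l a t := fun t ht =>
    (hh t).trans (logProfile.log_eq hl0.le ht)
  have hmax : ∀ t ∈ Ioc (0 : ℝ) 1, t ≠ tm → h t < h tm := by
    rintro t ⟨ht0, ht1⟩ hne
    rw [hh' t ht0, hh' tm htm01.1]
    rcases hne.lt_or_gt with hlt | hgt
    · exact logProfile.strictMonoOn_Ioc hl0 ha1 hyl hroot htm01.2.le ⟨ht0, hlt.le⟩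
        ⟨htm01.1, le_rfl⟩ hlt
    · exact logProfile.strictAntiOn_Icc hl0 ha1 hyl hroot htm01.1
        ⟨le_rfl, htm01.2.le⟩ ⟨hgt.le, ht1⟩ hgt
  have h1 : h 1 = 0 := by
    rw [hh, one_rpow, mul_one, one_mul, add_comm, div_self (by linarith), log_one]
  refine ⟨htm01, hcrit, second_deriv_eq_of_critical hl0.le htm01.1 hcrit,
    mul_inv_sq_sub_inv_sq_neg hl htm01, ?_, hmax⟩
  simpa [h1] using hmax 1 ⟨one_pos, le_rfl⟩ htm01.2.ne'
end

section
/- Let λ ∈ (0,1), a > −2λ/(1+λ), and α, β > −1. Then there is a constant C > 0 such that for every positive integer n, | ∫_0^1 (1+λt)^{β}·t^{α}·(t+λ)^{−1}·( t^{a+1}·(1+λt)/(t+λ) )^{n} dt − (1/n)·(1+λ)^{β}/(λ(a+2)+a) | ≤ C·n^{−2}. -/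
/-!
Write `f t = t ^ (a + 1) * (1 + l t) / (t + l)` and `g t = (1 + l t) ^ β * t ^ α / (t + l)`.
Then `f 1 = 1`, and with `c = a + 1 - (1 - l) / (1 + l) = (l (a + 2) + a) / (1 + l)`, which is
positive exactly when `a > -2l / (1 + l)`, one has `log f t ≤ -c (1 - t)` on `(0, 1]` and
`log f t ≥ -c (1 - t) - B (1 - t) ^ 2` on `[1/2, 1]`. So `f ^ n` is `e^{-nc(1 - t)}` up to a
relative error `n B (1 - t) ^ 2` near `1` and exponentially small away from `1`. Replacing
`g t f t ^ n` by `g 1 e^{-nc(1 - t)}`, whose integral is `g 1 / (nc)` up to an exponentially small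
term, costs `O(n⁻²)` because `g` is Lipschitz near `1` and
`∫ (1 - t) ^ k e^{-ν(1 - t)} ≤ k! / ν ^ (k + 1)`.
-/

open Real MeasureTheory Set
open scoped Nat NNReal

lemma exp_neg_le_factorial_div_pow (k : ℕ) {x : ℝ} (hx : 0 < x) : exp (-x) ≤ k ! / x ^ k := by
  rw [exp_neg, inv_le_comm₀ (exp_pos x) (by positivity), inv_div]
  exact pow_div_factorial_le_exp _ hx.le k

lemma integral_exp_neg_mul_one_sub {ν : ℝ} (hν : ν ≠ 0) (a : ℝ) :
    ∫ t in a..1, exp (-(ν * (1 - t))) = (1 - exp (-(ν * (1 - a)))) / ν := by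
  rw [intervalIntegral.integral_comp_sub_left (fun s => exp (-(ν * s))) 1, sub_self]
  simp only [← neg_mul]
  rw [intervalIntegral.integral_comp_mul_left (fun s => exp s) (neg_ne_zero.2 hν), integral_exp]
  simp only [neg_mul, mul_zero, exp_zero, smul_eq_mul]
  field_simp
  ring

lemma integral_one_sub_pow_mul_exp_neg_le (k : ℕ) {ν a : ℝ} (hν : 0 < ν) (ha : a ≤ 1) :
    ∫ t in a..1, (1 - t) ^ k * exp (-(ν * (1 - t))) ≤ k ! / ν ^ (k + 1) := by
  rw [intervalIntegral.integral_comp_sub_left (fun s => s ^ k * exp (-(ν * s))) 1, sub_self]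
  exact intervalIntegral_pow_mul_exp_neg_le (sub_nonneg.2 ha) hν

lemma abs_integral_le_of_abs_le_one_sub_pow_mul_exp {G : ℝ → ℝ} {a ν C : ℝ} (k : ℕ)
    (hν : 0 < ν) (ha : a ≤ 1) (hC : 0 ≤ C)
    (hG : ∀ t ∈ Ioc a 1, |G t| ≤ C * ((1 - t) ^ k * exp (-(ν * (1 - t))))) :
    |∫ t in a..1, G t| ≤ C * (k ! / ν ^ (k + 1)) := by
  rw [← Real.norm_eq_abs]
  calc ‖∫ t in a..1, G t‖ ≤ ∫ t in a..1, C * ((1 - t) ^ k * exp (-(ν * (1 - t)))) :=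
        intervalIntegral.norm_integral_le_of_norm_le ha (ae_of_all _ hG)
          (by apply Continuous.intervalIntegrable; fun_prop)
    _ = C * ∫ t in a..1, (1 - t) ^ k * exp (-(ν * (1 - t))) :=
        intervalIntegral.integral_const_mul _ _
    _ ≤ C * (k ! / ν ^ (k + 1)) := by
        gcongr; exact integral_one_sub_pow_mul_exp_neg_le k hν ha

lemma abs_integral_mul_le_of_abs_le_exp {g F : ℝ → ℝ} {a b ν : ℝ} (hab : a ≤ b) (hν : 0 ≤ ν)
    (hg : IntervalIntegrable g volume a b)
    (hF : ∀ t ∈ Ioc a b, |F t| ≤ exp (-(ν * (1 - t)))) :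
    |∫ t in a..b, g t * F t| ≤ exp (-(ν * (1 - b))) * ∫ t in a..b, |g t| := by
  rw [← Real.norm_eq_abs, ← intervalIntegral.integral_const_mul]
  refine intervalIntegral.norm_integral_le_of_norm_le hab (ae_of_all _ fun t ht => ?_)
    (hg.abs.const_mul _)
  rw [Real.norm_eq_abs, abs_mul, mul_comm]
  gcongr
  exact (hF t ht).trans (exp_le_exp.2 (by nlinarith [ht.2]))

lemma abs_integral_mul_sub_div_le_of_lipschitzOnWith {g F : ℝ → ℝ} {K : ℝ≥0} {ν B : ℝ}
    (hν : 0 < ν) (hB : 0 ≤ B) (hg : LipschitzOnWith K g (Icc (1 / 2) 1))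
    (hF : IntervalIntegrable F volume (1 / 2) 1)
    (hF_nonneg : ∀ t ∈ Icc (1 / 2 : ℝ) 1, 0 ≤ F t)
    (hF_le : ∀ t ∈ Icc (1 / 2 : ℝ) 1, F t ≤ exp (-(ν * (1 - t))))
    (hF_ge : ∀ t ∈ Icc (1 / 2 : ℝ) 1,
      exp (-(ν * (1 - t))) - F t ≤ B * ((1 - t) ^ 2 * exp (-(ν * (1 - t))))) :
    |(∫ t in (1 / 2 : ℝ)..1, g t * F t) - g 1 / ν|
      ≤ K / ν ^ 2 + |g 1| * (2 * B / ν ^ 3 + 2 / ν ^ 2) := by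
  set E : ℝ → ℝ := fun t => exp (-(ν * (1 - t)))
  -- `E` is the model for `F`: its integral over `(1/2, 1)` is `1 / ν` up to `e^{-ν/2} / ν`.
  have hsplit : (∫ t in (1 / 2 : ℝ)..1, g t * F t) - g 1 / ν
      = (∫ t in (1 / 2 : ℝ)..1, (g t - g 1) * F t)
        - g 1 * (∫ t in (1 / 2 : ℝ)..1, (E t - F t))
        - g 1 * (1 / ν - ∫ t in (1 / 2 : ℝ)..1, E t) := by
    have hgF : IntervalIntegrable (fun t => g t * F t) volume (1 / 2) 1 :=
      hF.continuousOn_mul (by rw [uIcc_of_le (by norm_num)]; exact hg.continuousOn)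
    simp only [sub_mul]
    rw [intervalIntegral.integral_sub hgF (hF.const_mul _),
      intervalIntegral.integral_sub (by apply Continuous.intervalIntegrable; fun_prop) hF,
      intervalIntegral.integral_const_mul]
    ring
  have hg_err : |∫ t in (1 / 2 : ℝ)..1, (g t - g 1) * F t| ≤ K / ν ^ 2 := by
    refine (abs_integral_le_of_abs_le_one_sub_pow_mul_exp 1 hν (by norm_num) K.2
      fun t ht => ?_).trans_eq (by simp [div_eq_mul_inv])
    have hlip := hg.dist_le_mul t (Ioc_subset_Icc_self ht) 1 ⟨by norm_num, le_rfl⟩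
    rw [Real.dist_eq, Real.dist_eq, abs_sub_comm t,
      abs_of_nonneg (by linarith [ht.2] : (0 : ℝ) ≤ 1 - t)] at hlip
    rw [abs_mul, pow_one, ← mul_assoc, abs_of_nonneg (hF_nonneg t (Ioc_subset_Icc_self ht))]
    exact mul_le_mul hlip (hF_le t (Ioc_subset_Icc_self ht))
      (hF_nonneg t (Ioc_subset_Icc_self ht)) (mul_nonneg K.2 (by linarith [ht.2]))
  have hF_err : |∫ t in (1 / 2 : ℝ)..1, (E t - F t)| ≤ 2 * B / ν ^ 3 := by
    refine (abs_integral_le_of_abs_le_one_sub_pow_mul_exp 2 hν (by norm_num) hB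
      fun t ht => ?_).trans_eq (by norm_num [Nat.factorial]; ring)
    rw [abs_of_nonneg (sub_nonneg.2 (hF_le t (Ioc_subset_Icc_self ht)))]
    exact hF_ge t (Ioc_subset_Icc_self ht)
  have hE_err : |1 / ν - ∫ t in (1 / 2 : ℝ)..1, E t| ≤ 2 / ν ^ 2 := by
    have hexp : exp (-(ν / 2)) ≤ 2 / ν := by
      convert exp_neg_le_factorial_div_pow 1 (half_pos hν) using 1; norm_num
    rw [integral_exp_neg_mul_one_sub hν.ne', show ν * (1 - 1 / 2) = ν / 2 by ring,
      show 1 / ν - (1 - exp (-(ν / 2))) / ν = exp (-(ν / 2)) / ν by ring,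
      abs_of_nonneg (by positivity), div_le_iff₀ hν]
    exact hexp.trans_eq (by field_simp)
  have hF_err' := mul_le_mul_of_nonneg_left hF_err (abs_nonneg (g 1))
  have hE_err' := mul_le_mul_of_nonneg_left hE_err (abs_nonneg (g 1))
  rw [hsplit, mul_add]
  grw [abs_sub, abs_sub, abs_mul, abs_mul]
  linarith

theorem abs_integral_mul_sub_div_le {g F : ℝ → ℝ} {K : ℝ≥0} {ν B : ℝ} (hν : 0 < ν)
    (hB : 0 ≤ B) (hg : IntervalIntegrable g volume 0 1)
    (hg_lip : LipschitzOnWith K g (Icc (1 / 2) 1))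
    (hF : AEStronglyMeasurable F (volume.restrict (Ioc 0 1)))
    (hF_nonneg : ∀ t ∈ Ioc (0 : ℝ) 1, 0 ≤ F t)
    (hF_le : ∀ t ∈ Ioc (0 : ℝ) 1, F t ≤ exp (-(ν * (1 - t))))
    (hF_ge : ∀ t ∈ Icc (1 / 2 : ℝ) 1,
      exp (-(ν * (1 - t))) - F t ≤ B * ((1 - t) ^ 2 * exp (-(ν * (1 - t))))) :
    |(∫ t in (0 : ℝ)..1, g t * F t) - g 1 / ν|
      ≤ (8 * ∫ t in (0 : ℝ)..1 / 2, |g t|) / ν ^ 2 + K / ν ^ 2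
        + |g 1| * (2 * B / ν ^ 3 + 2 / ν ^ 2) := by
  have hF_abs (t : ℝ) (ht : t ∈ Ioc (0 : ℝ) 1) : |F t| ≤ exp (-(ν * (1 - t))) := by
    rw [abs_of_nonneg (hF_nonneg t ht)]; exact hF_le t ht
  have hF_norm : ∀ᵐ t ∂volume.restrict (Ioc (0 : ℝ) 1), ‖F t‖ ≤ 1 :=
    ae_restrict_of_forall_mem measurableSet_Ioc fun t ht =>
      (hF_abs t ht).trans (exp_le_one_iff.2 (by nlinarith [ht.2]))
  have hF_int : IntervalIntegrable F volume 0 1 := by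
    rw [intervalIntegrable_iff_integrableOn_Ioc_of_le zero_le_one]
    have := (integrableOn_const (C := (1 : ℝ)) (by simp)).mul_bdd hF hF_norm
    simp only [one_mul] at this
    exact this
  have hgF_int : IntervalIntegrable (fun t => g t * F t) volume 0 1 := by
    rw [intervalIntegrable_iff_integrableOn_Ioc_of_le zero_le_one]
    exact hg.1.mul_bdd hF hF_norm
  have h0 : (0 : ℝ) ∈ uIcc 0 1 := by simp
  have h1 : (1 : ℝ) ∈ uIcc 0 1 := by simp
  have hhalf : (1 / 2 : ℝ) ∈ uIcc 0 1 := by rw [uIcc_of_le zero_le_one]; norm_num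
  have hIcc : Icc (1 / 2 : ℝ) 1 ⊆ Ioc 0 1 := fun t ht => ⟨by linarith [ht.1], ht.2⟩
  have hfar : |∫ t in (0 : ℝ)..1 / 2, g t * F t| ≤ (8 * ∫ t in (0 : ℝ)..1 / 2, |g t|) / ν ^ 2 := by
    have hexp : exp (-(ν * (1 - 1 / 2))) ≤ 8 / ν ^ 2 := by
      rw [show ν * (1 - 1 / 2) = ν / 2 by ring]
      convert exp_neg_le_factorial_div_pow 2 (half_pos hν) using 1
      norm_num [Nat.factorial]
      ring
    refine (abs_integral_mul_le_of_abs_le_exp (by norm_num) hν.le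
      (hg.mono_set (uIcc_subset_uIcc h0 hhalf))
      fun t ht => hF_abs t ⟨ht.1, ht.2.trans (by norm_num)⟩).trans ?_
    rw [mul_div_right_comm]
    exact mul_le_mul_of_nonneg_right hexp
      (intervalIntegral.integral_nonneg (by norm_num) fun t _ => abs_nonneg _)
  have hnear := abs_integral_mul_sub_div_le_of_lipschitzOnWith hν hB hg_lip
    (hF_int.mono_set (uIcc_subset_uIcc hhalf h1)) (fun t ht => hF_nonneg t (hIcc ht))
    (fun t ht => hF_le t (hIcc ht)) hF_ge
  rw [← intervalIntegral.integral_add_adjacent_intervals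
    (hgF_int.mono_set (uIcc_subset_uIcc h0 hhalf)) (hgF_int.mono_set (uIcc_subset_uIcc hhalf h1)),
    add_sub_assoc]
  grw [abs_add_le, hfar, hnear]
  rw [add_assoc]

theorem exists_abs_integral_mul_pow_sub_div_le {g f : ℝ → ℝ} {K : ℝ≥0} {c B : ℝ} (hc : 0 < c)
    (hB : 0 ≤ B) (hg : IntervalIntegrable g volume 0 1)
    (hg_lip : LipschitzOnWith K g (Icc (1 / 2) 1))
    (hf : AEStronglyMeasurable f (volume.restrict (Ioc 0 1)))
    (hf_nonneg : ∀ t ∈ Ioc (0 : ℝ) 1, 0 ≤ f t)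
    (hf_le : ∀ t ∈ Ioc (0 : ℝ) 1, f t ≤ exp (-(c * (1 - t))))
    (hf_ge : ∀ t ∈ Icc (1 / 2 : ℝ) 1, exp (-(c * (1 - t) + B * (1 - t) ^ 2)) ≤ f t) :
    ∃ C, ∀ n : ℕ, 0 < n → |(∫ t in (0 : ℝ)..1, g t * f t ^ n) - g 1 / (c * n)| ≤ C / n ^ 2 := by
  refine ⟨(8 * (∫ t in (0 : ℝ)..1 / 2, |g t|) + K + 2 * |g 1|) / c ^ 2 + 2 * |g 1| * B / c ^ 3,
    fun n hn => ?_⟩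
  have hn' : (0 : ℝ) < n := Nat.cast_pos.2 hn
  have hν : 0 < c * n := mul_pos hc hn'
  have hexp_pow (x : ℝ) : exp (-x) ^ n = exp (-(n * x)) := by rw [← exp_nat_mul, mul_neg]
  refine (abs_integral_mul_sub_div_le hν (mul_nonneg hn'.le hB) hg hg_lip (hf.pow n)
    (fun t ht => pow_nonneg (hf_nonneg t ht) n) (fun t ht => ?_) (fun t ht => ?_)).trans_eq ?_
  · calc f t ^ n ≤ exp (-(c * (1 - t))) ^ n := pow_le_pow_left₀ (hf_nonneg t ht) (hf_le t ht) n
      _ = exp (-(c * n * (1 - t))) := by rw [hexp_pow]; ring_nf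
  · -- `1 - e^{-x} ≤ x` with `x = n B (1 - t) ^ 2`.
    have hlow : exp (-(c * n * (1 - t))) * exp (-(n * B * (1 - t) ^ 2)) ≤ f t ^ n := by
      calc exp (-(c * n * (1 - t))) * exp (-(n * B * (1 - t) ^ 2))
          = exp (-(c * (1 - t) + B * (1 - t) ^ 2)) ^ n := by rw [hexp_pow, ← exp_add]; ring_nf
        _ ≤ f t ^ n := pow_le_pow_left₀ (exp_pos _).le (hf_ge t ht) n
    have hx := mul_le_mul_of_nonneg_left (add_one_le_exp (-(n * B * (1 - t) ^ 2)))
      (exp_pos (-(c * n * (1 - t)))).le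
    simp only [Pi.pow_apply]
    linarith
  · field_simp
    ring

lemma sub_one_sub_log_le_two_mul_sq {x : ℝ} (hx : 1 / 2 ≤ x) : x - 1 - log x ≤ 2 * (x - 1) ^ 2 := by
  have hx0 : 0 < x := by linarith
  have hlog := one_sub_inv_le_log_of_pos hx0
  have hsq : x - 1 - (1 - x⁻¹) = (x - 1) ^ 2 / x := by field_simp
  have hdiv : (x - 1) ^ 2 / x ≤ 2 * (x - 1) ^ 2 := by
    rw [div_le_iff₀ hx0]; nlinarith [sq_nonneg (x - 1)]
  linarith

lemma div_mul_log_add_log_one_add_mul_le_log_add {l t : ℝ} (hl0 : 0 ≤ l) (hl1 : l ≤ 1)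
    (ht0 : 0 < t) (ht1 : t ≤ 1) :
    (1 - l) / (1 + l) * log t + log (1 + l * t) ≤ log (t + l) := by
  set ψ : ℝ → ℝ := fun x => log (x + l) - log (1 + l * x) - (1 - l) / (1 + l) * log x
  set ψ' : ℝ → ℝ := fun x => 1 / (x + l) - l / (1 + l * x) - (1 - l) / (1 + l) * (1 / x)
  have hderiv (x : ℝ) (hx : 0 < x) : HasDerivAt ψ (ψ' x) x := by
    have hA : x + l ≠ 0 := by positivity
    have hB : 1 + l * x ≠ 0 := by positivity
    have h1 := ((hasDerivAt_id' x).add_const l).log hA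
    have h2 := (((hasDerivAt_id' x).const_mul l).const_add 1).log hB
    have h3 := ((hasDerivAt_id' x).log hx.ne').const_mul ((1 - l) / (1 + l))
    rw [mul_one] at h2
    exact (h1.fun_sub h2).fun_sub h3
  have hanti : AntitoneOn ψ (Ioc 0 1) := by
    refine antitoneOn_of_hasDerivWithinAt_nonpos (convex_Ioc 0 1)
      (fun x hx => (hderiv x hx.1).continuousAt.continuousWithinAt)
      (fun x hx => (hderiv x (by simp_all)).hasDerivWithinAt) fun x hx => ?_
    rw [interior_Ioc] at hx
    obtain ⟨hx0, -⟩ := hx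
    have hψ' : ψ' x = -((1 - l) * l * (1 - x) ^ 2 / ((1 + l) * x * (x + l) * (1 + l * x))) := by
      simp only [ψ']; field_simp; ring
    rw [hψ', neg_nonpos]
    have : 0 ≤ 1 - l := by linarith
    positivity
  have := hanti ⟨ht0, ht1⟩ ⟨one_pos, le_rfl⟩ ht1
  simp only [ψ, log_one, mul_one, sub_self, mul_zero] at this
  linarith

lemma log_rpow_mul_one_add_mul_div_add {l a t : ℝ} (hl : 0 ≤ l) (ht : 0 < t) :
    log (t ^ (a + 1) * (1 + l * t) / (t + l))
      = (a + 1) * log t + log (1 + l * t) - log (t + l) := by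
  rw [log_div (by positivity) (by positivity), log_mul (by positivity) (by positivity),
    log_rpow ht]

lemma rpow_mul_one_add_mul_div_add_le_exp {l a t : ℝ} (hl0 : 0 ≤ l) (hl1 : l ≤ 1)
    (ha : (1 - l) / (1 + l) ≤ a + 1) (ht0 : 0 < t) (ht1 : t ≤ 1) :
    t ^ (a + 1) * (1 + l * t) / (t + l) ≤ exp (-((a + 1 - (1 - l) / (1 + l)) * (1 - t))) := by
  rw [← log_le_iff_le_exp (by positivity), log_rpow_mul_one_add_mul_div_add hl0 ht0]
  have hψ := div_mul_log_add_log_one_add_mul_le_log_add hl0 hl1 ht0 ht1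
  have hlog : (a + 1 - (1 - l) / (1 + l)) * log t ≤ (a + 1 - (1 - l) / (1 + l)) * (t - 1) :=
    mul_le_mul_of_nonneg_left (log_le_sub_one_of_pos ht0) (sub_nonneg.2 ha)
  linarith

lemma exp_le_rpow_mul_one_add_mul_div_add {l a t : ℝ} (hl : 0 ≤ l) (ha : 0 ≤ a + 1)
    (ht0 : 1 / 2 ≤ t) :
    exp (-((a + 1 - (1 - l) / (1 + l)) * (1 - t) + (2 * (a + 1) + 2) * (1 - t) ^ 2))
      ≤ t ^ (a + 1) * (1 + l * t) / (t + l) := by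
  have ht : 0 < t := by linarith
  rw [← le_log_iff_exp_le (by positivity), log_rpow_mul_one_add_mul_div_add hl ht]
  set x := (1 + l * t) / (1 + l)
  set y := (t + l) / (1 + l)
  have hx : 1 / 2 ≤ x := by rw [le_div_iff₀ (by positivity)]; nlinarith
  have hx1 : (x - 1) ^ 2 ≤ (t - 1) ^ 2 := by
    have : x - 1 = l / (1 + l) * (t - 1) := by simp only [x]; field_simp; ring
    rw [this, mul_pow]
    refine mul_le_of_le_one_left (sq_nonneg _) (pow_le_one₀ (by positivity) ?_)
    rw [div_le_one (by positivity)]; linarith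
  -- The exponent splits into three terms of the form `z - 1 - log z`.
  have hsplit : (a + 1 - (1 - l) / (1 + l)) * (1 - t)
        + ((a + 1) * log t + log (1 + l * t) - log (t + l))
      = -((a + 1) * (t - 1 - log t) + (x - 1 - log x) - (y - 1 - log y)) := by
    rw [log_div (by positivity) (by positivity), log_div (by positivity) (by positivity)]
    simp only [x, y]; field_simp; ring
  have ht2 := mul_le_mul_of_nonneg_left (sub_one_sub_log_le_two_mul_sq ht0) ha
  have hx2 := sub_one_sub_log_le_two_mul_sq hx
  have hy : 0 ≤ y - 1 - log y := by linarith [log_le_sub_one_of_pos (show 0 < y by positivity)]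
  nlinarith

lemma exists_lipschitzOnWith_one_add_mul_rpow_mul_rpow_div {l : ℝ} (hl : 0 ≤ l) (α β : ℝ) :
    ∃ K, LipschitzOnWith K (fun t => (1 + l * t) ^ β * t ^ α / (t + l)) (Icc (1 / 2) 1) := by
  refine ContDiffOn.exists_lipschitzOnWith (n := 1) ?_ one_ne_zero (convex_Icc _ _) isCompact_Icc
  have hpos : ∀ t ∈ Icc (1 / 2 : ℝ) 1, 0 < t := fun t ht => by linarith [ht.1]
  refine ContDiffOn.div (ContDiffOn.mul ?_ ?_) (by fun_prop) fun t ht => ?_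
  · exact (contDiffOn_const.add (contDiffOn_const.mul contDiffOn_id)).rpow_const_of_ne
      fun t ht => (by have := hpos t ht; positivity)
  · exact contDiffOn_id.rpow_const_of_ne fun t ht => (hpos t ht).ne'
  · have := hpos t ht; positivity

lemma intervalIntegrable_one_add_mul_rpow_mul_rpow_div {l α : ℝ} (hl : 0 < l) (hα : -1 < α)
    (β : ℝ) : IntervalIntegrable (fun t => (1 + l * t) ^ β * t ^ α / (t + l)) volume 0 1 := by
  have h := (intervalIntegral.intervalIntegrable_rpow' hα (a := 0) (b := 1)).continuousOn_mul
    (g := fun t => (1 + l * t) ^ β / (t + l)) ?_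
  · simpa only [mul_div_right_comm] using h
  rw [uIcc_of_le zero_le_one]
  refine ContinuousOn.div (ContinuousOn.rpow_const (by fun_prop) fun t ht => Or.inl ?_)
    (by fun_prop) fun t ht => ?_
  · have := ht.1; positivity
  · have := ht.1; positivity

theorem stmt10_general (l a α β : ℝ) (hl : l ∈ Set.Ioo (0 : ℝ) 1) (ha : a > -2 * l / (1 + l))
    (hα : α > -1) :
    ∃ C > 0, ∀ n : ℕ, 0 < n →
      |(∫ t in Set.Ioo (0 : ℝ) 1,
            (1 + l * t) ^ β * t ^ α / (t + l) * (t ^ (a + 1) * (1 + l * t) / (t + l)) ^ n)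
          - (1 / n) * (1 + l) ^ β / (l * (a + 2) + a)|
        ≤ C * (n : ℝ) ^ (-(2 : ℝ)) := by
  obtain ⟨hl0, hl1⟩ := hl
  have hc : 0 < a + 1 - (1 - l) / (1 + l) := by
    rw [gt_iff_lt, div_lt_iff₀ (by linarith)] at ha
    rw [sub_pos, div_lt_iff₀ (by linarith)]
    linarith
  have ha1 : 0 ≤ a + 1 := by
    have : 0 ≤ (1 - l) / (1 + l) := div_nonneg (by linarith) (by linarith)
    linarith
  obtain ⟨K, hK⟩ := exists_lipschitzOnWith_one_add_mul_rpow_mul_rpow_div hl0.le α β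
  obtain ⟨C, hC⟩ := exists_abs_integral_mul_pow_sub_div_le hc (by linarith)
    (intervalIntegrable_one_add_mul_rpow_mul_rpow_div hl0 hα β) hK
    (by fun_prop : Measurable fun t : ℝ => t ^ (a + 1) * (1 + l * t) / (t + l)).aestronglyMeasurable
    (fun t ht => by have := ht.1; positivity)
    (fun t ht => rpow_mul_one_add_mul_div_add_le_exp hl0.le hl1.le (by linarith) ht.1 ht.2)
    (fun t ht => exp_le_rpow_mul_one_add_mul_div_add hl0.le (by linarith) ht.1)
  refine ⟨max C 1, by positivity, fun n hn => ?_⟩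
  have hconst : 1 / (n : ℝ) * (1 + l) ^ β / (l * (a + 2) + a)
      = (1 + l * 1) ^ β * 1 ^ α / (1 + l) / ((a + 1 - (1 - l) / (1 + l)) * n) := by
    rw [one_rpow, mul_one, mul_one]
    field_simp
    ring
  rw [← integral_Ioc_eq_integral_Ioo, ← intervalIntegral.integral_of_le zero_le_one, hconst,
    rpow_neg (Nat.cast_nonneg n), ← div_eq_mul_inv, rpow_two]
  exact (hC n hn).trans (by gcongr; exact le_max_left C 1)

theorem stmt10 (l a α β : ℝ) (hl : l ∈ Set.Ioo (0 : ℝ) 1) (ha : a > -2 * l / (1 + l))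
    (hα : α > -1) (hβ : β > -1) :
    ∃ C > 0, ∀ n : ℕ, 0 < n →
      |(∫ t in Set.Ioo (0 : ℝ) 1,
            (1 + l * t) ^ β * t ^ α / (t + l) * (t ^ (a + 1) * (1 + l * t) / (t + l)) ^ n)
          - (1 / n) * (1 + l) ^ β / (l * (a + 2) + a)|
        ≤ C * (n : ℝ) ^ (-(2 : ℝ)) :=
  stmt10_general l a α β hl ha hα
end

section
/- Let λ ∈ (0,1), a > 2λ/(1−λ), and α, β ∈ ℝ. Set y = (a + aλ² + 2λ²)/(2λ(a+1)) and x* = y − √(y² − 1). Then x* ∈ (λ,1), (x*)^{a+1}·(1−λx*)/(x*−λ) ∈ (0,1), and for every positive integer n: | (1/π)·Re( ∫_0^π z^{α+1}(1−λz)^{β}(z−λ)^{−1}·(z^{a+1}(1−λz)/(z−λ))^{n} dφ at z = x*·e^{iφ} ) | ≤ (x*)^{α−a}·ψ_β(λx*)·( (x*)^{a+1}·(1−λx*)/(x*−λ) )^{n+1}, where ψ_β(u) = (1+u)^{β−1} if β ≥ 1 and ψ_β(u) = (1−u)^{β−1} if β < 1. -/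
open Real

/-- `ψ_β(u) = (1+u)^(β-1)` if `β ≥ 1`, and `(1-u)^(β-1)` if `β < 1`. -/
noncomputable def psiAux (β u : ℝ) : ℝ :=
  if 1 ≤ β then (1 + u) ^ (β - 1) else (1 - u) ^ (β - 1)

/-
On the circle `|z| = x` with `λ < x < 1`, each factor of the integrand is controlled by its value at
`z = x`: `1 - λx ≤ |1 - λz| ≤ 1 + λx`, which bounds `|1 - λz|^(β-1)` by `ψ_β(λx)` whatever the sign
of `β - 1`, and the Möbius ratio `|1 - λz| / |z - λ|` is largest at `z = x`. The average over
`[0, π]` inherits the pointwise bound.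

The choice of `y` makes `x*`, the smaller root of `x² - 2yx + 1`, the critical point of
`g(x) = x^(a+1) (1 - λx) / (x - λ)` in `(λ, 1)`. As `g' > 0` on `(x*, 1)` and `g 1 = 1`, `g x* < 1`.
-/

lemma sub_sqrt_sq_sub_one_isRoot {y : ℝ} (hy : 1 ≤ y) :
    (y - √(y ^ 2 - 1)) ^ 2 - 2 * y * (y - √(y ^ 2 - 1)) + 1 = 0 := by
  have := sq_sqrt (show 0 ≤ y ^ 2 - 1 by nlinarith)
  linear_combination this

lemma sub_sqrt_sq_sub_one_mem_Ioo {l y : ℝ} (hl : l ≤ 1) (hy : 1 < y)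
    (hly : 2 * l * y < 1 + l ^ 2) : y - √(y ^ 2 - 1) ∈ Set.Ioo l 1 := by
  constructor
  · have : √(y ^ 2 - 1) < y - l := by
      rw [sqrt_lt' (by linarith)]
      nlinarith
    linarith
  · have : y - 1 < √(y ^ 2 - 1) := by
      rw [lt_sqrt (by linarith)]
      nlinarith
    linarith

lemma hasDerivAt_ratio (l a : ℝ) {x : ℝ} (hx : 0 < x) (hxl : x ≠ l) :
    HasDerivAt (fun x => x ^ (a + 1) * (1 - l * x) / (x - l))
      (x ^ a * (-((a + 1) * l) * x ^ 2 + (a + a * l ^ 2 + 2 * l ^ 2) * x - (a + 1) * l)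
        / (x - l) ^ 2) x := by
  have hpow : HasDerivAt (fun x => x ^ (a + 1)) ((a + 1) * x ^ a) x := by
    simpa using hasDerivAt_rpow_const (p := a + 1) (Or.inl hx.ne')
  have hlin : HasDerivAt (fun x => 1 - l * x) (-l) x := by
    simpa using ((hasDerivAt_id x).const_mul l).const_sub 1
  refine ((hpow.mul hlin).div ((hasDerivAt_id x).sub_const l) (sub_ne_zero.2 hxl)).congr_deriv ?_
  simp only [Pi.mul_apply, id, rpow_add hx, rpow_one]
  ring

lemma ratio_mem_Ioo {l a x₀ : ℝ} (hl : 0 < l) (ha : -1 < a) (hlx : l < x₀) (hx₁ : x₀ < 1)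
    (hroot : (a + 1) * l * x₀ ^ 2 - (a + a * l ^ 2 + 2 * l ^ 2) * x₀ + (a + 1) * l = 0) :
    x₀ ^ (a + 1) * (1 - l * x₀) / (x₀ - l) ∈ Set.Ioo 0 1 := by
  have hx₀ : 0 < x₀ := hl.trans hlx
  have hlx₀ : 0 < 1 - l * x₀ := by nlinarith
  have hx₀l : 0 < x₀ - l := by linarith
  refine ⟨by positivity, ?_⟩
  have hderiv (x : ℝ) (hx : x ∈ Set.Icc x₀ 1) :=
    hasDerivAt_ratio l a (hx₀.trans_le hx.1) (hlx.trans_le hx.1).ne'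
  have hmono : StrictMonoOn (fun x => x ^ (a + 1) * (1 - l * x) / (x - l)) (Set.Icc x₀ 1) := by
    refine strictMonoOn_of_deriv_pos (convex_Icc x₀ 1)
      (fun x hx => (hderiv x hx).continuousAt.continuousWithinAt) fun x hx => ?_
    rw [interior_Icc] at hx
    rw [(hderiv x (Set.Ioo_subset_Icc_self hx)).deriv]
    obtain ⟨hx₀x, hx1⟩ := hx
    have hnum : 0 < -((a + 1) * l) * x ^ 2 + (a + a * l ^ 2 + 2 * l ^ 2) * x - (a + 1) * l := by
      -- `x₀` is a root of the numerator, and its other root is `1 / x₀ > 1`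
      have hfac : x₀ * (-((a + 1) * l) * x ^ 2 + (a + a * l ^ 2 + 2 * l ^ 2) * x - (a + 1) * l)
          = (a + 1) * l * (x - x₀) * (1 - x₀ * x) := by linear_combination (-x) * hroot
      have : 0 < 1 - x₀ * x := by nlinarith
      have : 0 < x - x₀ := sub_pos.2 hx₀x
      have : 0 < a + 1 := by linarith
      exact pos_of_mul_pos_right (hfac ▸ by positivity) hx₀.le
    have : 0 < x := hx₀.trans hx₀x
    have : 0 < x - l := by linarith
    positivity
  have h := hmono (Set.left_mem_Icc.2 hx₁.le) (Set.right_mem_Icc.2 hx₁.le) hx₁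
  have hl1 : (1 : ℝ) - l ≠ 0 := by linarith
  simpa [hl1] using h

lemma rpow_le_psiAux {β u r : ℝ} (hu : u < 1) (hlo : 1 - u ≤ r) (hhi : r ≤ 1 + u) :
    r ^ (β - 1) ≤ psiAux β u := by
  unfold psiAux
  split_ifs with hβ
  · exact rpow_le_rpow (by linarith) hhi (by linarith)
  · exact rpow_le_rpow_of_nonpos (by linarith) hlo (by linarith)

lemma norm_one_sub_mul_div_norm_sub_le {l x : ℝ} {z : ℂ} (hl : 0 ≤ l) (hlx : l < x)
    (hx : x ≤ 1) (hz : ‖z‖ = x) : ‖1 - (l : ℂ) * z‖ / ‖z - l‖ ≤ (1 - l * x) / (x - l) := by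
  have hd : x - l ≤ ‖z - l‖ := by
    simpa [hz, abs_of_nonneg hl] using norm_sub_norm_le z (l : ℂ)
  have hre : z.re ≤ x := hz ▸ Complex.re_le_norm z
  have hnorm : z.re ^ 2 + z.im ^ 2 = x ^ 2 := by
    rw [← hz, Complex.sq_norm, Complex.normSq_apply]; ring
  have hsq_num : ‖1 - (l : ℂ) * z‖ ^ 2 = 1 - 2 * l * z.re + l ^ 2 * x ^ 2 := by
    rw [Complex.sq_norm, Complex.normSq_apply]
    simp only [Complex.sub_re, Complex.sub_im, Complex.mul_re, Complex.mul_im, Complex.one_re,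
      Complex.one_im, Complex.ofReal_re, Complex.ofReal_im]
    linear_combination l ^ 2 * hnorm
  have hsq_den : ‖z - l‖ ^ 2 = x ^ 2 - 2 * l * z.re + l ^ 2 := by
    rw [Complex.sq_norm, Complex.normSq_apply]
    simp only [Complex.sub_re, Complex.sub_im, Complex.ofReal_re, Complex.ofReal_im]
    linear_combination hnorm
  have hlx1 : 0 ≤ 1 - l * x := by nlinarith
  rw [div_le_div_iff₀ (by linarith) (by linarith)]
  -- the defect of the squared inequality factors as `2 l (x - Re z) (1 - l²) (1 - x²)`
  refine (pow_le_pow_iff_left₀ (by positivity) (by positivity) two_ne_zero).1 ?_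
  rw [mul_pow, mul_pow, hsq_num, hsq_den]
  nlinarith [mul_nonneg (mul_nonneg hl (sub_nonneg.2 hre))
    (mul_nonneg (by nlinarith : (0:ℝ) ≤ 1 - l ^ 2) (by nlinarith : (0:ℝ) ≤ 1 - x ^ 2))]

lemma norm_integrand_eq (l a α β : ℝ) (n : ℕ) {z : ℂ} (hz : z ≠ 0)
    (hw : 1 - (l : ℂ) * z ≠ 0) :
    ‖z ^ ((α : ℂ) + 1) * (1 - (l : ℂ) * z) ^ (β : ℂ) / (z - (l : ℂ)) *
        (z ^ ((a : ℂ) + 1) * (1 - (l : ℂ) * z) / (z - (l : ℂ))) ^ n‖ =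
      ‖z‖ ^ (α - a) * ‖1 - (l : ℂ) * z‖ ^ (β - 1) *
        (‖z‖ ^ (a + 1) * ‖1 - (l : ℂ) * z‖ / ‖z - l‖) ^ (n + 1) := by
  have hx : 0 < ‖z‖ := norm_pos_iff.2 hz
  have hr : ‖1 - (l : ℂ) * z‖ ≠ 0 := norm_ne_zero_iff.2 hw
  have hα : ‖z‖ ^ (α + 1) = ‖z‖ ^ (α - a) * ‖z‖ ^ (a + 1) := by
    rw [← rpow_add hx]; ring_nf
  have hcast (s : ℝ) : (s : ℂ) + 1 = ((s + 1 : ℝ) : ℂ) := by push_cast; rfl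
  rw [hcast α, hcast a]
  simp only [norm_mul, norm_div, norm_pow, Complex.norm_cpow_real, hα, rpow_sub_one hr]
  field_simp
  ring

lemma norm_integrand_le (a α β : ℝ) (n : ℕ) {l x : ℝ} {z : ℂ} (hl : 0 ≤ l) (hlx : l < x)
    (hx : x ≤ 1) (hz : ‖z‖ = x) :
    ‖z ^ ((α : ℂ) + 1) * (1 - (l : ℂ) * z) ^ (β : ℂ) / (z - (l : ℂ)) *
        (z ^ ((a : ℂ) + 1) * (1 - (l : ℂ) * z) / (z - (l : ℂ))) ^ n‖ ≤
      x ^ (α - a) * psiAux β (l * x) * (x ^ (a + 1) * (1 - l * x) / (x - l)) ^ (n + 1) := by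
  have hlx1 : l * x < 1 := by nlinarith
  have hw_lo : 1 - l * x ≤ ‖1 - (l : ℂ) * z‖ := by
    simpa [hz, abs_of_nonneg hl] using norm_sub_norm_le (1 : ℂ) (l * z)
  have hw_hi : ‖1 - (l : ℂ) * z‖ ≤ 1 + l * x := by
    simpa [hz, abs_of_nonneg hl] using norm_sub_le (1 : ℂ) (l * z)
  have hz0 : z ≠ 0 := norm_pos_iff.1 (by linarith)
  have hw0 : 1 - (l : ℂ) * z ≠ 0 := norm_pos_iff.1 (by linarith)
  have hψ := rpow_le_psiAux (β := β) hlx1 hw_lo hw_hi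
  have hmob := norm_one_sub_mul_div_norm_sub_le hl hlx hx hz
  subst hz
  rw [norm_integrand_eq l a α β n hz0 hw0, mul_div_assoc, mul_div_assoc]
  have hψ0 : 0 ≤ psiAux β (l * ‖z‖) := (rpow_nonneg (norm_nonneg _) _).trans hψ
  gcongr ?_ * ?_ * (_ * ?_) ^ _

lemma abs_re_average_le {f : ℝ → ℂ} {b C : ℝ} (hb : 0 < b)
    (hf : ∀ φ ∈ Set.uIoc 0 b, ‖f φ‖ ≤ C) :
    |(1 / b) * (∫ φ in (0 : ℝ)..b, f φ).re| ≤ C := by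
  have hint := intervalIntegral.norm_integral_le_of_norm_le_const hf
  rw [sub_zero, abs_of_pos hb] at hint
  rw [abs_mul, abs_of_pos (one_div_pos.2 hb), one_div_mul_eq_div, div_le_iff₀ hb]
  exact (Complex.abs_re_le_norm _).trans hint

theorem stmt13 (l a α β : ℝ) (hl : l ∈ Set.Ioo (0 : ℝ) 1) (ha : a > 2 * l / (1 - l))
    (y xs : ℝ) (hy : y = (a + a * l ^ 2 + 2 * l ^ 2) / (2 * l * (a + 1)))
    (hxs : xs = y - Real.sqrt (y ^ 2 - 1)) :
    xs ∈ Set.Ioo l 1 ∧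
    xs ^ (a + 1) * (1 - l * xs) / (xs - l) ∈ Set.Ioo (0 : ℝ) 1 ∧
    ∀ n : ℕ, 0 < n →
      |(1 / π) *
          (∫ φ in (0 : ℝ)..π,
            (fun z : ℂ => z ^ ((α : ℂ) + 1) * (1 - (l : ℂ) * z) ^ (β : ℂ) / (z - (l : ℂ)) *
                (z ^ ((a : ℂ) + 1) * (1 - (l : ℂ) * z) / (z - (l : ℂ))) ^ n)
              ((xs : ℂ) * Complex.exp (Complex.I * (φ : ℂ)))).re|
        ≤ xs ^ (α - a) * psiAux β (l * xs) *
            (xs ^ (a + 1) * (1 - l * xs) / (xs - l)) ^ (n + 1) := by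
  obtain ⟨hl0, hl1⟩ := hl
  have ha' : 2 * l < a * (1 - l) := by rwa [gt_iff_lt, div_lt_iff₀ (by linarith)] at ha
  have ha0 : 0 < a := by nlinarith
  have hden : 0 < 2 * l * (a + 1) := by positivity
  have hy' : 2 * l * (a + 1) * y = a + a * l ^ 2 + 2 * l ^ 2 := by
    rw [hy, mul_div_cancel₀ _ hden.ne']
  have hy1 : 1 < y := by nlinarith
  have hly : 2 * l * y < 1 + l ^ 2 := by nlinarith
  have hmem : xs ∈ Set.Ioo l 1 := hxs ▸ sub_sqrt_sq_sub_one_mem_Ioo hl1.le hy1 hly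
  have hroot : (a + 1) * l * xs ^ 2 - (a + a * l ^ 2 + 2 * l ^ 2) * xs + (a + 1) * l = 0 := by
    have hquad : xs ^ 2 - 2 * y * xs + 1 = 0 := by
      rw [hxs]; exact sub_sqrt_sq_sub_one_isRoot hy1.le
    linear_combination (a + 1) * l * hquad + xs * hy'
  refine ⟨hmem, ratio_mem_Ioo hl0 (by linarith) hmem.1 hmem.2 hroot, fun n _ => ?_⟩
  refine abs_re_average_le pi_pos fun φ _ =>
    norm_integrand_le a α β n hl0.le hmem.1 hmem.2.le ?_
  rw [norm_mul, Complex.norm_exp_I_mul_ofReal, Complex.norm_real,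
    norm_of_nonneg (hl0.trans hmem.1).le, mul_one]
end
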